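/- Linear L∞ stability of the fully discrete DF-FV method (§2.2): Consider the linear advection equation U_t + aU_x = 0 with a > 0 on a periodic mesh of N ≥ 3 cells of width Δx > 0, let θ ∈ [1,2], K ≥ 0, and let Δt > 0 satisfy the CFL condition aΔt/Δx ≤ 1/2. Suppose the data at time t satisfy |Ū_{j+1/2}(t)| ≤ K, |Ū_j(t)| ≤ K, and Ū_j(t) = ½(Ū_{j−1/2}(t) + Ū_{j+1/2}(t)) for all j ∈ ℤ/Nℤ. Then the values produced by one full step of the scheme — (i) reconstruct one-sided point values U_j^± from {Ū_{j+1/2}(t)} by the generalized minmod reconstruction with parameter θ; (ii) forward-Euler evolve Ū*_{j+1/2} = Ū_{j+1/2}(t) − (aΔt/Δx)(U⁻_{j+1} − U⁻_j) and Ū*_j = Ū_j(t) − (aΔt/Δx)(Ū_{j+1/2}(t) − Ū_{j−1/2}(t)); (iii) apply the 1-D post-processing to {Ū*_j} and {Ū*_{j+1/2}} to obtain Ū_{j+1/2}(t+Δt) and Ū_j(t+Δt) — satisfy |Ū_{j+1/2}(t+Δt)| ≤ K and |Ū_j(t+Δt)| ≤ K for all j ∈ ℤ/Nℤ. -/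

import Mathlib

/-- The minmod function of two real numbers. -/
noncomputable def minmod2 (c₁ c₂ : ℝ) : ℝ :=
  if 0 < c₁ ∧ 0 < c₂ then min c₁ c₂
  else if c₁ < 0 ∧ c₂ < 0 then max c₁ c₂
  else 0

/-- The minmod function of three real numbers. -/
noncomputable def minmod3 (c₁ c₂ c₃ : ℝ) : ℝ :=
  if 0 < c₁ ∧ 0 < c₂ ∧ 0 < c₃ then min c₁ (min c₂ c₃)
  else if c₁ < 0 ∧ c₂ < 0 ∧ c₃ < 0 then max c₁ (max c₂ c₃)
  else 0

/-- Generalized minmod slope `σ_{j+1/2}` of the staggered averages `Uh j = Ū_{j+1/2}`: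
`σ_{j+1/2} = minmod(θ(Ū_{j+1/2} − Ū_{j−1/2})/Δx, (Ū_{j+3/2} − Ū_{j−1/2})/(2Δx),
θ(Ū_{j+3/2} − Ū_{j+1/2})/Δx)` (periodic indexing by `ZMod N`). -/
noncomputable def recSlope {N : ℕ} (Δx θ : ℝ) (Uh : ZMod N → ℝ) (j : ZMod N) : ℝ :=
  minmod3 (θ * (Uh j - Uh (j - 1)) / Δx) ((Uh (j + 1) - Uh (j - 1)) / (2 * Δx))
    (θ * (Uh (j + 1) - Uh j) / Δx)

/-- Reconstructed point value `U_j^+ = Ū_{j+1/2} − (Δx/2)σ_{j+1/2}`. -/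
noncomputable def recUplus {N : ℕ} (Δx θ : ℝ) (Uh : ZMod N → ℝ) (j : ZMod N) : ℝ :=
  Uh j - Δx / 2 * recSlope Δx θ Uh j

/-- Reconstructed point value `U_j^− = Ū_{j−1/2} + (Δx/2)σ_{j−1/2}`. -/
noncomputable def recUminus {N : ℕ} (Δx θ : ℝ) (Uh : ZMod N → ℝ) (j : ZMod N) : ℝ :=
  Uh (j - 1) + Δx / 2 * recSlope Δx θ Uh (j - 1)

/-- Forward-Euler evolution of the staggered average:
`Ū*_{j+1/2} = Ū_{j+1/2} − ν(U⁻_{j+1} − U⁻_j)` with `ν = aΔt/Δx`. -/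
noncomputable def evolveStag {N : ℕ} (Δx θ ν : ℝ) (Uh : ZMod N → ℝ) (j : ZMod N) : ℝ :=
  Uh j - ν * (recUminus Δx θ Uh (j + 1) - recUminus Δx θ Uh j)

/-- Forward-Euler evolution of the primal average:
`Ū*_j = Ū_j − ν(Ū_{j+1/2} − Ū_{j−1/2})` with `ν = aΔt/Δx`. -/
noncomputable def evolvePrim {N : ℕ} (ν : ℝ) (Uh Uc : ZMod N → ℝ) (j : ZMod N) : ℝ :=
  Uc j - ν * (Uh j - Uh (j - 1))

/-- Post-processing slope `(U_x)*_j = 2·minmod((Ū*_j − Ū*_{j−1/2})/Δx, (Ū*_{j+1/2} − Ū*_j)/Δx)`,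
where `Ubar j = Ū*_j` and `Uhalf j = Ū*_{j+1/2}`. -/
noncomputable def ppSlope {N : ℕ} (Δx : ℝ) (Ubar Uhalf : ZMod N → ℝ) (j : ZMod N) : ℝ :=
  2 * minmod2 ((Ubar j - Uhalf (j - 1)) / Δx) ((Uhalf j - Ubar j) / Δx)

/-- Post-processed staggered average
`Ū_{j+1/2}(t+Δt) = ½(U^{*,−}_{j+1/2} + U^{*,+}_{j+1/2})` with
`U^{*,−}_{j+1/2} = Ū*_j + (Δx/2)(U_x)*_j` and `U^{*,+}_{j+1/2} = Ū*_{j+1} − (Δx/2)(U_x)*_{j+1}`. -/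
noncomputable def ppStag {N : ℕ} (Δx : ℝ) (Ubar Uhalf : ZMod N → ℝ) (j : ZMod N) : ℝ :=
  ((Ubar j + Δx / 2 * ppSlope Δx Ubar Uhalf j) +
    (Ubar (j + 1) - Δx / 2 * ppSlope Δx Ubar Uhalf (j + 1))) / 2

/-- Post-processed primal average `Ū_j(t+Δt) = ½(Ū_{j−1/2}(t+Δt) + Ū_{j+1/2}(t+Δt))`. -/
noncomputable def ppPrim {N : ℕ} (Δx : ℝ) (Ubar Uhalf : ZMod N → ℝ) (j : ZMod N) : ℝ :=
  (ppStag Δx Ubar Uhalf (j - 1) + ppStag Δx Ubar Uhalf j) / 2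


/-! The scheme satisfies a local maximum principle, of which the `L∞` bound is the case
`s = [-K, K]`: every new value lies between two neighbouring values of the previous stage.
Minmod returns a value between `0` and each of its arguments, so every half-slope increment
`(Δx/2)σ` lies between `0` and a neighbouring jump (the factor `θ ≤ 2` is absorbed by `Δx/2`).
The evolved staggered value is `Ū_{j+1/2} − ν(d + X − Y)` with `d = Ū_{j+1/2} − Ū_{j−1/2}`
and `X, Y` between `0` and `d`; so `d + X − Y` lies between `0` and `2d`, and the CFL bound
`ν ≤ 1/2` keeps the update between `Ū_{j−1/2}` and `Ū_{j+1/2}`.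
Since `Ū_j = ½(Ū_{j−1/2} + Ū_{j+1/2})`, the evolved primal value is the convex combination
`(½ + ν)Ū_{j−1/2} + (½ − ν)Ū_{j+1/2}`. -/

open Set
open scoped Interval

section Intervals

variable {a b d e t x X Y ν : ℝ}

lemma mul_mem_uIcc_mul (r : ℝ) (hx : x ∈ [[a, b]]) : r * x ∈ [[r * a, r * b]] := by
  rw [← image_const_mul_uIcc]
  exact mem_image_of_mem _ hx

lemma mul_mem_uIcc_zero_of_mem_Icc (ht : t ∈ Icc (0 : ℝ) 1) (d : ℝ) : t * d ∈ [[0, d]] := by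
  have := mem_image_of_mem (· * d) (Icc_subset_uIcc ht)
  rwa [image_mul_const_uIcc, zero_mul, one_mul] at this

lemma add_mem_uIcc_of_mem_uIcc_zero_sub (he : e ∈ [[0, b - a]]) : a + e ∈ [[a, b]] := by
  have := mem_image_of_mem (a + ·) he
  rwa [image_const_add_uIcc, add_zero, add_sub_cancel] at this

lemma sub_mem_uIcc_of_mem_uIcc_zero_sub (he : e ∈ [[0, b - a]]) : b - e ∈ [[a, b]] := by
  have := mem_image_of_mem (b - ·) he
  rwa [image_const_sub_uIcc, sub_zero, sub_sub_cancel, uIcc_comm] at this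

lemma add_div_two_mem_uIcc (a b : ℝ) : (a + b) / 2 ∈ [[a, b]] := by
  rcases le_total a b with h | h
  · exact mem_uIcc_of_le (by linarith) (by linarith)
  · exact mem_uIcc_of_ge (by linarith) (by linarith)

lemma mul_add_sub_mem_uIcc_zero (hν : ν ∈ Icc (0 : ℝ) (1 / 2)) (hX : X ∈ [[0, d]])
    (hY : Y ∈ [[0, d]]) : ν * (d + X - Y) ∈ [[0, d]] := by
  obtain ⟨hν0, hν2⟩ := hν
  rcases le_total 0 d with hd | hd
  · rw [uIcc_of_le hd] at hX hY ⊢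
    exact ⟨by nlinarith [hX.1, hY.2], by nlinarith [hX.2, hY.1]⟩
  · rw [uIcc_of_ge hd] at hX hY ⊢
    exact ⟨by nlinarith [hX.1, hY.2], by nlinarith [hX.2, hY.1]⟩

end Intervals

section Minmod

lemma minmod2_mem_uIcc_left (c₁ c₂ : ℝ) : minmod2 c₁ c₂ ∈ [[0, c₁]] := by
  unfold minmod2
  split_ifs with hpos hneg
  · exact mem_uIcc_of_le (le_min hpos.1.le hpos.2.le) (min_le_left _ _)
  · exact mem_uIcc_of_ge (le_max_left _ _) (max_le hneg.1.le hneg.2.le)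
  · exact left_mem_uIcc

lemma minmod2_mem_uIcc_right (c₁ c₂ : ℝ) : minmod2 c₁ c₂ ∈ [[0, c₂]] := by
  unfold minmod2
  split_ifs with hpos hneg
  · exact mem_uIcc_of_le (le_min hpos.1.le hpos.2.le) (min_le_right _ _)
  · exact mem_uIcc_of_ge (le_max_right _ _) (max_le hneg.1.le hneg.2.le)
  · exact left_mem_uIcc

lemma minmod3_mem_uIcc_left (c₁ c₂ c₃ : ℝ) : minmod3 c₁ c₂ c₃ ∈ [[0, c₁]] := by
  unfold minmod3
  split_ifs with hpos hneg
  · exact mem_uIcc_of_le (le_min hpos.1.le (le_min hpos.2.1.le hpos.2.2.le)) (min_le_left _ _)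
  · exact mem_uIcc_of_ge (le_max_left _ _) (max_le hneg.1.le (max_le hneg.2.1.le hneg.2.2.le))
  · exact left_mem_uIcc

lemma minmod3_mem_uIcc_right (c₁ c₂ c₃ : ℝ) : minmod3 c₁ c₂ c₃ ∈ [[0, c₃]] := by
  unfold minmod3
  split_ifs with hpos hneg
  · exact mem_uIcc_of_le (le_min hpos.1.le (le_min hpos.2.1.le hpos.2.2.le))
      ((min_le_right _ _).trans (min_le_right _ _))
  · exact mem_uIcc_of_ge ((le_max_right _ _).trans (le_max_right _ _))
      (max_le hneg.1.le (max_le hneg.2.1.le hneg.2.2.le))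
  · exact left_mem_uIcc

end Minmod

section Scheme

variable {N : ℕ} {Δx θ ν : ℝ}

lemma half_mul_mem_uIcc_of_mem_uIcc_mul_div (hΔx : 0 < Δx) (hθ : θ ∈ Icc (0 : ℝ) 2)
    {x d : ℝ} (hx : x ∈ [[0, θ * d / Δx]]) : Δx / 2 * x ∈ [[0, d]] := by
  have hscaled := mul_mem_uIcc_mul (Δx / 2) hx
  rw [mul_zero, show Δx / 2 * (θ * d / Δx) = θ / 2 * d by field_simp] at hscaled
  exact uIcc_subset_uIcc_left
    (mul_mem_uIcc_zero_of_mem_Icc ⟨by linarith [hθ.1], by linarith [hθ.2]⟩ d) hscaled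

lemma half_mul_recSlope_mem_uIcc_backward (hΔx : 0 < Δx) (hθ : θ ∈ Icc (0 : ℝ) 2)
    (Uh : ZMod N → ℝ) (j : ZMod N) :
    Δx / 2 * recSlope Δx θ Uh j ∈ [[0, Uh j - Uh (j - 1)]] :=
  half_mul_mem_uIcc_of_mem_uIcc_mul_div hΔx hθ (minmod3_mem_uIcc_left _ _ _)

lemma half_mul_recSlope_mem_uIcc_forward (hΔx : 0 < Δx) (hθ : θ ∈ Icc (0 : ℝ) 2)
    (Uh : ZMod N → ℝ) (j : ZMod N) :
    Δx / 2 * recSlope Δx θ Uh j ∈ [[0, Uh (j + 1) - Uh j]] :=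
  half_mul_mem_uIcc_of_mem_uIcc_mul_div hΔx hθ (minmod3_mem_uIcc_right _ _ _)

lemma evolveStag_mem_uIcc (hΔx : 0 < Δx) (hθ : θ ∈ Icc (0 : ℝ) 2)
    (hν : ν ∈ Icc (0 : ℝ) (1 / 2)) (Uh : ZMod N → ℝ) (j : ZMod N) :
    evolveStag Δx θ ν Uh j ∈ [[Uh (j - 1), Uh j]] := by
  have hY := half_mul_recSlope_mem_uIcc_forward hΔx hθ Uh (j - 1)
  rw [sub_add_cancel] at hY
  have hupdate := mul_add_sub_mem_uIcc_zero hν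
    (half_mul_recSlope_mem_uIcc_backward hΔx hθ Uh j) hY
  convert sub_mem_uIcc_of_mem_uIcc_zero_sub hupdate using 1
  simp only [evolveStag, recUminus, add_sub_cancel_right]
  ring

lemma evolvePrim_mem_uIcc (hν : ν ∈ Icc (0 : ℝ) (1 / 2)) {Uh Uc : ZMod N → ℝ} {j : ZMod N}
    (hrel : Uc j = (Uh (j - 1) + Uh j) / 2) :
    evolvePrim ν Uh Uc j ∈ [[Uh (j - 1), Uh j]] := by
  have hweight : 1 / 2 + ν ∈ Icc (0 : ℝ) 1 := ⟨by linarith [hν.1], by linarith [hν.2]⟩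
  convert sub_mem_uIcc_of_mem_uIcc_zero_sub
    (mul_mem_uIcc_zero_of_mem_Icc hweight (Uh j - Uh (j - 1))) using 1
  rw [evolvePrim, hrel]
  ring

lemma half_mul_ppSlope_eq (Δx : ℝ) (Ub Uf : ZMod N → ℝ) (j : ZMod N) :
    Δx / 2 * ppSlope Δx Ub Uf j =
      Δx * minmod2 ((Ub j - Uf (j - 1)) / Δx) ((Uf j - Ub j) / Δx) := by
  rw [ppSlope]
  ring

lemma half_mul_ppSlope_mem_uIcc_backward (hΔx : 0 < Δx) (Ub Uf : ZMod N → ℝ) (j : ZMod N) :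
    Δx / 2 * ppSlope Δx Ub Uf j ∈ [[0, Ub j - Uf (j - 1)]] := by
  rw [half_mul_ppSlope_eq]
  convert mul_mem_uIcc_mul Δx (minmod2_mem_uIcc_left _ _) using 2
  · rw [mul_zero]
  · rw [mul_div_cancel₀ _ hΔx.ne']

lemma half_mul_ppSlope_mem_uIcc_forward (hΔx : 0 < Δx) (Ub Uf : ZMod N → ℝ) (j : ZMod N) :
    Δx / 2 * ppSlope Δx Ub Uf j ∈ [[0, Uf j - Ub j]] := by
  rw [half_mul_ppSlope_eq]
  convert mul_mem_uIcc_mul Δx (minmod2_mem_uIcc_right _ _) using 2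
  · rw [mul_zero]
  · rw [mul_div_cancel₀ _ hΔx.ne']

variable {s : Set ℝ} [s.OrdConnected]

lemma evolveStag_mem (hΔx : 0 < Δx) (hθ : θ ∈ Icc (0 : ℝ) 2)
    (hν : ν ∈ Icc (0 : ℝ) (1 / 2))
    {Uh : ZMod N → ℝ} (hUh : ∀ j, Uh j ∈ s) (j : ZMod N) :
    evolveStag Δx θ ν Uh j ∈ s :=
  OrdConnected.uIcc_subset ‹_› (hUh _) (hUh _) (evolveStag_mem_uIcc hΔx hθ hν Uh j)

lemma evolvePrim_mem (hν : ν ∈ Icc (0 : ℝ) (1 / 2)) {Uh Uc : ZMod N → ℝ}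
    (hUh : ∀ j, Uh j ∈ s) (hrel : ∀ j, Uc j = (Uh (j - 1) + Uh j) / 2) (j : ZMod N) :
    evolvePrim ν Uh Uc j ∈ s :=
  OrdConnected.uIcc_subset ‹_› (hUh _) (hUh _) (evolvePrim_mem_uIcc hν (hrel j))

lemma ppStag_mem (hΔx : 0 < Δx) {Ub Uf : ZMod N → ℝ} (hUb : ∀ j, Ub j ∈ s)
    (hUf : ∀ j, Uf j ∈ s) (j : ZMod N) :
    ppStag Δx Ub Uf j ∈ s := by
  have hleft : Ub j + Δx / 2 * ppSlope Δx Ub Uf j ∈ s :=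
    OrdConnected.uIcc_subset ‹_› (hUb j) (hUf j)
      (add_mem_uIcc_of_mem_uIcc_zero_sub (half_mul_ppSlope_mem_uIcc_forward hΔx Ub Uf j))
  have hright : Ub (j + 1) - Δx / 2 * ppSlope Δx Ub Uf (j + 1) ∈ s := by
    have hslope := half_mul_ppSlope_mem_uIcc_backward hΔx Ub Uf (j + 1)
    rw [add_sub_cancel_right] at hslope
    exact OrdConnected.uIcc_subset ‹_› (hUf j) (hUb (j + 1))
      (sub_mem_uIcc_of_mem_uIcc_zero_sub hslope)
  exact OrdConnected.uIcc_subset ‹_› hleft hright (add_div_two_mem_uIcc _ _)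

lemma ppPrim_mem (hΔx : 0 < Δx) {Ub Uf : ZMod N → ℝ} (hUb : ∀ j, Ub j ∈ s)
    (hUf : ∀ j, Uf j ∈ s) (j : ZMod N) :
    ppPrim Δx Ub Uf j ∈ s :=
  OrdConnected.uIcc_subset ‹_› (ppStag_mem hΔx hUb hUf _) (ppStag_mem hΔx hUb hUf _)
    (add_div_two_mem_uIcc _ _)

end Scheme

theorem DFFV_linear_Linfty_stability_general (N : ℕ)
    (a Δx Δt θ K : ℝ) (ha : 0 < a) (hΔx : 0 < Δx) (hΔt : 0 < Δt)
    (hθ : θ ∈ Set.Icc (1 : ℝ) 2) (hCFL : a * Δt / Δx ≤ 1 / 2)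
    (Uh Uc : ZMod N → ℝ)
    (hUh : ∀ j, |Uh j| ≤ K)
    (hrel : ∀ j, Uc j = (Uh (j - 1) + Uh j) / 2) :
    ∀ j : ZMod N,
      |ppStag Δx (evolvePrim (a * Δt / Δx) Uh Uc) (evolveStag Δx θ (a * Δt / Δx) Uh) j| ≤ K ∧
      |ppPrim Δx (evolvePrim (a * Δt / Δx) Uh Uc) (evolveStag Δx θ (a * Δt / Δx) Uh) j| ≤ K := by
  have hν : a * Δt / Δx ∈ Icc (0 : ℝ) (1 / 2) := ⟨by positivity, hCFL⟩
  have hθ' : θ ∈ Icc (0 : ℝ) 2 := ⟨by linarith [hθ.1], hθ.2⟩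
  have hUh' : ∀ j, Uh j ∈ Icc (-K) K := fun j => abs_le.1 (hUh j)
  have hUb := evolvePrim_mem hν hUh' hrel
  have hUf := evolveStag_mem hΔx hθ' hν hUh'
  exact fun j => ⟨abs_le.2 (ppStag_mem hΔx hUb hUf j), abs_le.2 (ppPrim_mem hΔx hUb hUf j)⟩

/-- Linear L∞ stability of the fully discrete DF-FV method for `U_t + aU_x = 0`, `a > 0`:
under the CFL condition `aΔt/Δx ≤ 1/2`, if the data at time `t` satisfy
`|Ū_{j+1/2}(t)| ≤ K`, `|Ū_j(t)| ≤ K` and `Ū_j(t) = ½(Ū_{j−1/2}(t) + Ū_{j+1/2}(t))`,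
then one full step of the scheme (minmod reconstruction with parameter `θ ∈ [1,2]`,
forward-Euler evolution, and post-processing) produces values bounded by `K`. -/
theorem DFFV_linear_Linfty_stability (N : ℕ) (hN : 3 ≤ N)
    (a Δx Δt θ K : ℝ) (ha : 0 < a) (hΔx : 0 < Δx) (hΔt : 0 < Δt)
    (hθ : θ ∈ Set.Icc (1 : ℝ) 2) (hK : 0 ≤ K) (hCFL : a * Δt / Δx ≤ 1 / 2)
    (Uh Uc : ZMod N → ℝ)
    (hUh : ∀ j, |Uh j| ≤ K) (hUc : ∀ j, |Uc j| ≤ K)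
    (hrel : ∀ j, Uc j = (Uh (j - 1) + Uh j) / 2) :
    ∀ j : ZMod N,
      |ppStag Δx (evolvePrim (a * Δt / Δx) Uh Uc) (evolveStag Δx θ (a * Δt / Δx) Uh) j| ≤ K ∧
      |ppPrim Δx (evolvePrim (a * Δt / Δx) Uh Uc) (evolveStag Δx θ (a * Δt / Δx) Uh) j| ≤ K :=
  DFFV_linear_Linfty_stability_general N a Δx Δt θ K ha hΔx hΔt hθ hCFL Uh Uc hUh hrel
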